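/- For every quadruple of reals b₁ < b₂ < b₃ < b₄, the infimum over x ∈ [b₂, b₃] of E_x[τ(b₁) ∧ σ(b₄)] is strictly positive; that is, the expected first exit time of the process x + X from the open interval (b₁, b₄) is bounded away from zero uniformly over starting points x in [b₂, b₃]. -/

import Mathlib

open MeasureTheory ProbabilityTheory Filter Set
open scoped ENNReal NNReal Classical Topology

noncomputable section

namespace MFGPaper

variable {Ω : Type*}

/-- A real function is càdlàg on `[0, ∞)`. -/
def CadlagOn (g : ℝ → ℝ) : Prop :=
  ∀ t : ℝ, 0 ≤ t →
    ContinuousWithinAt g (Set.Ici t) t ∧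
      (0 < t → ∃ l : ℝ, Filter.Tendsto g (nhdsWithin t (Set.Iio t)) (nhds l))

/-- `X` is a Lévy process with finite mean on the filtered probability space. -/
structure IsLevy [mΩ : MeasurableSpace Ω] (P : Measure Ω) (𝓕 : Filtration ℝ mΩ)
    (X : ℝ → Ω → ℝ) : Prop where
  adapted : Adapted 𝓕 X
  init : ∀ᵐ ω ∂P, X 0 ω = 0
  cadlag : ∀ᵐ ω ∂P, CadlagOn fun t => X t ω
  indep_incr : ∀ s t : ℝ, 0 ≤ s → s ≤ t →
    Indep (MeasurableSpace.comap (fun ω => X t ω - X s ω) Real.measurableSpace) (𝓕 s) P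
  stat_incr : ∀ s t : ℝ, 0 ≤ s → s ≤ t →
    Measure.map (fun ω => X t ω - X s ω) P = Measure.map (X (t - s)) P
  int_one : Integrable (X 1) P

/-- The process is not a.s. nondecreasing, not a.s. nonincreasing (in time, on `[0,∞)`). -/
def NotMonotoneAS [mΩ : MeasurableSpace Ω] (P : Measure Ω) (X : ℝ → Ω → ℝ) : Prop :=
  ¬ (∀ᵐ ω ∂P, MonotoneOn (fun t => X t ω) (Set.Ici (0 : ℝ))) ∧
    ¬ (∀ᵐ ω ∂P, AntitoneOn (fun t => X t ω) (Set.Ici (0 : ℝ)))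

/-- The process is not a.s. constant. -/
def NotConstantAS [mΩ : MeasurableSpace Ω] (P : Measure Ω) (X : ℝ → Ω → ℝ) : Prop :=
  ¬ (∀ᵐ ω ∂P, ∀ t : ℝ, 0 ≤ t → X t ω = X 0 ω)

/-- First time the translated path `x + X` is `≤ a` (with value `∞` if never). -/
def hitLow (X : ℝ → Ω → ℝ) (x a : ℝ) (ω : Ω) : ℝ≥0∞ :=
  sInf (ENNReal.ofReal '' {s : ℝ | 0 ≤ s ∧ x + X s ω ≤ a})

/-- First time the translated path `x + X` is `≥ b` (with value `∞` if never). -/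
def hitHigh (X : ℝ → Ω → ℝ) (x b : ℝ) (ω : Ω) : ℝ≥0∞ :=
  sInf (ENNReal.ofReal '' {s : ℝ | 0 ≤ s ∧ b ≤ x + X s ω})

/-- `∫_0^T g(s) e^{-ε s} ds` for a (possibly infinite) horizon `T`. -/
def discIntTo (g : ℝ → ℝ) (ε : ℝ) (T : ℝ≥0∞) : ℝ :=
  ∫ s in Set.Ioi (0 : ℝ), (if ENNReal.ofReal s < T then Real.exp (-ε * s) * g s else 0)

/-- `e^{-ε T}`, read as `0` when `T = ∞`. -/
def discAt (ε : ℝ) (T : ℝ≥0∞) : ℝ :=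
  if T = ∞ then 0 else Real.exp (-ε * T.toReal)

/-- The Dynkin-game payoff `M_x^{ε}(τ, σ)` with integrand `ρ`. -/
def payoff [mΩ : MeasurableSpace Ω] (P : Measure Ω) (X : ℝ → Ω → ℝ) (ρ : ℝ → ℝ)
    (qu qd ε x : ℝ) (τ σ : Ω → ℝ≥0∞) : ℝ :=
  ∫ ω, (discIntTo (fun s => ρ (x + X s ω)) ε (min (τ ω) (σ ω))
      + (if σ ω ≤ τ ω then qd * discAt ε (σ ω) else 0)
      - (if τ ω < σ ω then qu * discAt ε (τ ω) else 0)) ∂P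

/-- `ℝ≥0∞`-valued stopping times of the filtration. -/
def IsStoppingTimeE [mΩ : MeasurableSpace Ω] (𝓕 : Filtration ℝ mΩ) (τ : Ω → ℝ≥0∞) : Prop :=
  ∀ t : ℝ, 0 ≤ t → MeasurableSet[𝓕 t] {ω | τ ω ≤ ENNReal.ofReal t}

/-- The value `V_{ε}(x) = sup_τ inf_σ M_x(τ, σ)` of the Dynkin game. -/
def gameValue [mΩ : MeasurableSpace Ω] (P : Measure Ω) (𝓕 : Filtration ℝ mΩ)
    (X : ℝ → Ω → ℝ) (ρ : ℝ → ℝ) (qu qd ε x : ℝ) : ℝ :=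
  ⨆ τ : {τ : Ω → ℝ≥0∞ // IsStoppingTimeE 𝓕 τ},
    ⨅ σ : {σ : Ω → ℝ≥0∞ // IsStoppingTimeE 𝓕 σ},
      payoff P X ρ qu qd ε x τ.1 σ.1

/-- `(A, B)` is a saddle (Nash equilibrium) pair of thresholds for the Dynkin game. -/
def IsSaddle [mΩ : MeasurableSpace Ω] (P : Measure Ω) (𝓕 : Filtration ℝ mΩ)
    (X : ℝ → Ω → ℝ) (ρ : ℝ → ℝ) (qu qd ε : ℝ) (A B : ℝ) : Prop :=
  ∀ x : ℝ, ∀ τ σ : Ω → ℝ≥0∞, IsStoppingTimeE 𝓕 τ → IsStoppingTimeE 𝓕 σ →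
    payoff P X ρ qu qd ε x τ (hitHigh X x B) ≤
        payoff P X ρ qu qd ε x (hitLow X x A) (hitHigh X x B) ∧
      payoff P X ρ qu qd ε x (hitLow X x A) (hitHigh X x B) ≤
        payoff P X ρ qu qd ε x (hitLow X x A) σ

/-- Standing assumptions on the running cost `c`, with `cx`, `cxx` its partial
derivatives in the first variable. -/
structure CostAssumptions (c cx cxx : ℝ → ℝ → ℝ) : Prop where
  cont : Continuous fun q : ℝ × ℝ => c q.1 q.2
  nonneg : ∀ x y, 0 ≤ c x y
  hasDeriv1 : ∀ y x, HasDerivAt (fun z => c z y) (cx x y) x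
  hasDeriv2 : ∀ y x, HasDerivAt (fun z => cx z y) (cxx x y) x
  cxx_cont : ∀ y, Continuous fun x => cxx x y
  strict_convex : ∀ y, StrictConvexOn ℝ Set.univ fun x => c x y
  min_at_zero : ∀ y x, c 0 y ≤ c x y
  cxx_unif_pos : ∀ r : ℝ, 0 < r → ∃ δ : ℝ, 0 < δ ∧ ∀ x y : ℝ, r ≤ |x| → δ ≤ cxx x y
  lin_growth : ∃ N : ℝ, 0 < N ∧ ∀ y : ℝ, ∃ M : ℝ, 0 < M ∧ ∀ x : ℝ, N * |x| ≤ c x y + M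

/-- Integrability of the discounted derivative of the cost along the process. -/
def CxIntegrable [mΩ : MeasurableSpace Ω] (P : Measure Ω) (X : ℝ → Ω → ℝ)
    (cx : ℝ → ℝ → ℝ) : Prop :=
  ∀ x y ε : ℝ, 0 < ε →
    (∫⁻ ω, (∫⁻ s in Set.Ioi (0 : ℝ),
      ENNReal.ofReal (|cx (x + X s ω) y| * Real.exp (-ε * s))) ∂P) < ∞

/-- Admissible controls: nonnegative, adapted, right-continuous nondecreasing,
integrable at every time. -/
structure IsAdmissible [mΩ : MeasurableSpace Ω] (P : Measure Ω) (𝓕 : Filtration ℝ mΩ)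
    (U D : ℝ → Ω → ℝ) : Prop where
  nonnegU : ∀ t ω, 0 ≤ U t ω
  nonnegD : ∀ t ω, 0 ≤ D t ω
  adaptedU : Adapted 𝓕 U
  adaptedD : Adapted 𝓕 D
  monoU : ∀ᵐ ω ∂P, MonotoneOn (fun t => U t ω) (Set.Ici (0 : ℝ))
  monoD : ∀ᵐ ω ∂P, MonotoneOn (fun t => D t ω) (Set.Ici (0 : ℝ))
  rcU : ∀ᵐ ω ∂P, ∀ t : ℝ, 0 ≤ t → ContinuousWithinAt (fun s => U s ω) (Set.Ici t) t
  rcD : ∀ᵐ ω ∂P, ∀ t : ℝ, 0 ≤ t → ContinuousWithinAt (fun s => D s ω) (Set.Ici t) t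
  intU : ∀ t : ℝ, 0 ≤ t → Integrable (U t) P
  intD : ∀ t : ℝ, 0 ≤ t → Integrable (D t) P

/-- The Lebesgue–Stieltjes measure of a path (junk value `0` if the path is not
monotone right-continuous). -/
def pathMeasure (g : ℝ → ℝ) : Measure ℝ :=
  if h : Monotone g ∧ ∀ x : ℝ, ContinuousWithinAt g (Set.Ici x) x then
    StieltjesFunction.measure ⟨g, h.1, h.2⟩
  else 0

/-- `∫_{(0,∞)} e^{-ε s} dU_s` along the path `t ↦ U t ω` (extended by its value
at `0` to the negative half-line). -/
def discControlCost (ε : ℝ) (U : ℝ → Ω → ℝ) (ω : Ω) : ℝ :=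
  ∫ s in Set.Ioi (0 : ℝ), Real.exp (-ε * s) ∂(pathMeasure fun t => U (max t 0) ω)

/-- The `ε`-discounted cost of an admissible control `(U, D)`. -/
def Jdisc [mΩ : MeasurableSpace Ω] (P : Measure Ω) (X : ℝ → Ω → ℝ) (c : ℝ → ℝ → ℝ)
    (qu qd ε x p : ℝ) (U D : ℝ → Ω → ℝ) : ℝ :=
  ∫ ω, ((∫ s in Set.Ioi (0 : ℝ), Real.exp (-ε * s) * c (x + X s ω + U s ω - D s ω) p)
      + qu * discControlCost ε U ω + qd * discControlCost ε D ω
      + qu * U 0 ω + qd * D 0 ω) ∂P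

/-- The `ε`-discounted value function `G_ε(x, p)`. -/
def Gdisc [mΩ : MeasurableSpace Ω] (P : Measure Ω) (𝓕 : Filtration ℝ mΩ)
    (X : ℝ → Ω → ℝ) (c : ℝ → ℝ → ℝ) (qu qd ε x p : ℝ) : ℝ :=
  ⨅ UD : {UD : (ℝ → Ω → ℝ) × (ℝ → Ω → ℝ) // IsAdmissible P 𝓕 UD.1 UD.2},
    Jdisc P X c qu qd ε x p UD.1.1 UD.1.2

/-- The ergodic cost of an admissible control `(U, D)`. -/
def Jerg [mΩ : MeasurableSpace Ω] (P : Measure Ω) (X : ℝ → Ω → ℝ) (c : ℝ → ℝ → ℝ)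
    (qu qd x p : ℝ) (U D : ℝ → Ω → ℝ) : ℝ :=
  Filter.limsup
    (fun T : ℝ => (1 / T) *
      ∫ ω, ((∫ s in Set.Ioc (0 : ℝ) T, c (x + X s ω + U s ω - D s ω) p)
        + qu * U T ω + qd * D T ω) ∂P)
    Filter.atTop

/-- The ergodic value function `G(x, p)`. -/
def Gerg [mΩ : MeasurableSpace Ω] (P : Measure Ω) (𝓕 : Filtration ℝ mΩ)
    (X : ℝ → Ω → ℝ) (c : ℝ → ℝ → ℝ) (qu qd x p : ℝ) : ℝ :=
  ⨅ UD : {UD : (ℝ → Ω → ℝ) × (ℝ → Ω → ℝ) // IsAdmissible P 𝓕 UD.1 UD.2},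
    Jerg P X c qu qd x p UD.1.1 UD.1.2

/-- `(U, D)` is the reflecting control at barriers `a ≤ b` for the process started
at `x` (when `a = b` this is the degenerate control freezing the state at `a`). -/
structure IsReflecting [mΩ : MeasurableSpace Ω] (P : Measure Ω) (𝓕 : Filtration ℝ mΩ)
    (X : ℝ → Ω → ℝ) (x a b : ℝ) (U D : ℝ → Ω → ℝ) : Prop where
  adm : IsAdmissible P 𝓕 U D
  initU : ∀ᵐ ω ∂P, U 0 ω = max (a - x) 0
  initD : ∀ᵐ ω ∂P, D 0 ω = max (x - b) 0
  mem_Icc : ∀ᵐ ω ∂P, ∀ t : ℝ, 0 ≤ t → x + X t ω + U t ω - D t ω ∈ Set.Icc a b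
  flatU : ∀ᵐ ω ∂P, ∀ s t : ℝ, 0 ≤ s → s ≤ t →
    (∀ u ∈ Set.Icc s t, a < x + X u ω + U u ω - D u ω) → U t ω = U s ω
  flatD : ∀ᵐ ω ∂P, ∀ s t : ℝ, 0 ≤ s → s ≤ t →
    (∀ u ∈ Set.Icc s t, x + X u ω + U u ω - D u ω < b) → D t ω = D s ω

/-- Convergence in total variation of a family of laws to `μ`. -/
def TVTendsto (ν : ℝ → Measure ℝ) (μ : Measure ℝ) : Prop :=
  Filter.Tendsto (fun t : ℝ => ⨆ s : Set ℝ, |(ν t s).toReal - (μ s).toReal|)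
    Filter.atTop (nhds 0)

/-- The mean-field term `p^{a,b} = ∫ f dμ_{a,b}` (with `p^{c,c} = f(c)` in the
degenerate case). -/
def pbar (f : ℝ → ℝ) (μ : ℝ → ℝ → Measure ℝ) (a b : ℝ) : ℝ :=
  if a < b then ∫ z, f z ∂(μ a b) else f a

/-- `μ` is the family of stationary distributions of the doubly reflected process:
the reflected process exists for all barriers `a < b` and all starting points, and
its time-`t` laws converge in total variation to `μ a b`, a probability measure
carried by `[a, b]`. -/
def IsStationaryFamily [mΩ : MeasurableSpace Ω] (P : Measure Ω) (𝓕 : Filtration ℝ mΩ)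
    (X : ℝ → Ω → ℝ) (μ : ℝ → ℝ → Measure ℝ) : Prop :=
  ∀ a b : ℝ, a < b →
    IsProbabilityMeasure (μ a b) ∧ μ a b (Set.Icc a b)ᶜ = 0 ∧
      ∀ x : ℝ, ∃ U D : ℝ → Ω → ℝ, IsReflecting P 𝓕 X x a b U D ∧
        TVTendsto (fun t => Measure.map (fun ω => x + X t ω + U t ω - D t ω) P) (μ a b)


/-- The value function of the Dynkin game with integrand `cx (·, y)`. -/
def Vval [mΩ : MeasurableSpace Ω] (P : Measure Ω) (𝓕 : Filtration ℝ mΩ)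
    (X : ℝ → Ω → ℝ) (cx : ℝ → ℝ → ℝ) (qu qd ε y x : ℝ) : ℝ :=
  gameValue P 𝓕 X (fun z => cx z y) qu qd ε x

/-- `(a, b)` is an `ε`-discounted mean-field-game equilibrium: the reflecting control
at `(a, b)` attains the `ε`-discounted value against its own induced mean-field term. -/
def IsDiscMFGEquilibrium [mΩ : MeasurableSpace Ω] (P : Measure Ω) (𝓕 : Filtration ℝ mΩ)
    (X : ℝ → Ω → ℝ) (c : ℝ → ℝ → ℝ) (qu qd : ℝ) (f : ℝ → ℝ) (μ : ℝ → ℝ → Measure ℝ)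
    (ε a b : ℝ) : Prop :=
  a ≤ b ∧ ∀ x : ℝ, ∃ U D : ℝ → Ω → ℝ, IsReflecting P 𝓕 X x a b U D ∧
    Gdisc P 𝓕 X c qu qd ε x (pbar f μ a b) = Jdisc P X c qu qd ε x (pbar f μ a b) U D

/-- `(a, b)` is an ergodic mean-field-game equilibrium. -/
def IsErgMFGEquilibrium [mΩ : MeasurableSpace Ω] (P : Measure Ω) (𝓕 : Filtration ℝ mΩ)
    (X : ℝ → Ω → ℝ) (c : ℝ → ℝ → ℝ) (qu qd : ℝ) (f : ℝ → ℝ) (μ : ℝ → ℝ → Measure ℝ)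
    (a b : ℝ) : Prop :=
  a ≤ b ∧ ∀ x : ℝ, ∃ U D : ℝ → Ω → ℝ, IsReflecting P 𝓕 X x a b U D ∧
    Gerg P 𝓕 X c qu qd x (pbar f μ a b) = Jerg P X c qu qd x (pbar f μ a b) U D

/-! The exit time is at least `t` on the event that `X` stays within `η` of `0` during `[0, t)`,
where `η` is less than both `b₂ - b₁` and `b₄ - b₃`. By right-continuity at `0`,
almost every path does so for some `t = 1 / (n + 1)`, so one of these countably many events has
positive probability. Right-continuity also lets us test the event on rational times only, which
makes it measurable. -/

theorem ofReal_le_hitLow {X : ℝ → Ω → ℝ} {x a t : ℝ} {ω : Ω}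
    (h : ∀ s, 0 ≤ s → s < t → a < x + X s ω) : ENNReal.ofReal t ≤ hitLow X x a ω :=
  le_sInf <| by
    rintro _ ⟨s, ⟨hs, hsa⟩, rfl⟩
    exact ENNReal.ofReal_le_ofReal <| not_lt.1 fun hst => (h s hs hst).not_ge hsa

theorem ofReal_le_hitHigh {X : ℝ → Ω → ℝ} {x b t : ℝ} {ω : Ω}
    (h : ∀ s, 0 ≤ s → s < t → x + X s ω < b) : ENNReal.ofReal t ≤ hitHigh X x b ω :=
  le_sInf <| by
    rintro _ ⟨s, ⟨hs, hbs⟩, rfl⟩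
    exact ENNReal.ofReal_le_ofReal <| not_lt.1 fun hst => (h s hs hst).not_ge hbs

theorem ofReal_le_min_hitLow_hitHigh {X : ℝ → Ω → ℝ} {x a b t : ℝ} {ω : Ω}
    (h : ∀ s, 0 ≤ s → s < t → x + X s ω ∈ Ioo a b) :
    ENNReal.ofReal t ≤ min (hitLow X x a ω) (hitHigh X x b ω) :=
  le_min (ofReal_le_hitLow fun s hs hst => (h s hs hst).1)
    (ofReal_le_hitHigh fun s hs hst => (h s hs hst).2)

theorem mem_of_forall_rat_mem_of_continuousWithinAt_Ici {α : Type*} [TopologicalSpace α]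
    {g : ℝ → α} {C : Set α} {a b s : ℝ} (hC : IsClosed C)
    (hg : ∀ u ∈ Ico a b, ContinuousWithinAt g (Ici u) u)
    (hq : ∀ q : ℚ, (q : ℝ) ∈ Ico a b → g q ∈ C) (hs : s ∈ Ico a b) : g s ∈ C := by
  set S : Set ℝ := Ioo s b ∩ range ((↑) : ℚ → ℝ)
  have hsS : s ∈ closure S :=
    closure_minimal (Rat.denseRange_cast.open_subset_closure_inter isOpen_Ioo) isClosed_closure
      (by rw [closure_Ioo hs.2.ne]; exact left_mem_Icc.2 hs.2.le)
  refine hC.closure_subset <| ((hg s hs).mono fun u hu => hu.1.1.le).mem_closure hsS ?_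
  rintro _ ⟨hu, q, rfl⟩
  exact hq q ⟨hs.1.trans hu.1.le, hu.2⟩

theorem exists_measure_ne_zero_of_ae_mem_iUnion {ι : Type*} [Countable ι] [MeasurableSpace Ω]
    {μ : Measure Ω} [NeZero μ] {s : ι → Set Ω} (h : ∀ᵐ ω ∂μ, ω ∈ ⋃ i, s i) :
    ∃ i, μ (s i) ≠ 0 := by
  obtain ⟨i, hi⟩ := exists_measure_pos_of_not_measure_iUnion_null (μ := μ) (s := s) fun h0 =>
    let ⟨_, hω, hω'⟩ := (h.and (measure_eq_zero_iff_ae_notMem.1 h0)).exists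
    hω' hω
  exact ⟨i, hi.ne'⟩

theorem exists_measure_ne_zero_forall_abs_le [MeasurableSpace Ω] {P : Measure Ω} [NeZero P]
    {X : ℝ → Ω → ℝ} (hXm : ∀ t, Measurable (X t)) (h0 : ∀ᵐ ω ∂P, X 0 ω = 0)
    (hrc : ∀ᵐ ω ∂P, ∀ t, 0 ≤ t → ContinuousWithinAt (fun s => X s ω) (Ici t) t)
    {η : ℝ} (hη : 0 < η) :
    ∃ t > 0, ∃ A : Set Ω, MeasurableSet A ∧ P A ≠ 0 ∧
      ∀ᵐ ω ∂P, ω ∈ A → ∀ s ∈ Ico 0 t, |X s ω| ≤ η := by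
  set A : ℕ → Set Ω := fun n =>
    ⋂ q ∈ {q : ℚ | (q : ℝ) ∈ Ico 0 (1 / ((n : ℝ) + 1))}, {ω | |X q ω| ≤ η}
  have hA : ∀ n, MeasurableSet (A n) := fun n =>
    .biInter (to_countable _) fun q _ => measurableSet_le (hXm q).abs measurable_const
  have hcover : ∀ᵐ ω ∂P, ω ∈ ⋃ n, A n := by
    filter_upwards [h0, hrc] with ω hω0 hωrc
    obtain ⟨δ, hδ, hball⟩ := Metric.continuousWithinAt_iff.1 (hωrc 0 le_rfl) η hη
    obtain ⟨n, hn⟩ := exists_nat_one_div_lt hδ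
    refine mem_iUnion.2 ⟨n, mem_iInter₂.2 fun q hq => ?_⟩
    have hq' : dist (q : ℝ) 0 < δ := by
      rw [Real.dist_eq, sub_zero, abs_of_nonneg hq.1]; linarith [hq.2]
    simpa only [mem_ofPred_eq, Real.dist_eq, hω0, sub_zero] using (hball hq.1 hq').le
  obtain ⟨n, hn⟩ := exists_measure_ne_zero_of_ae_mem_iUnion hcover
  refine ⟨1 / ((n : ℝ) + 1), by positivity, A n, hA n, hn, ?_⟩
  filter_upwards [hrc] with ω hωrc hωA s hs
  exact mem_of_forall_rat_mem_of_continuousWithinAt_Ici (C := {y : ℝ | |y| ≤ η})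
    (isClosed_le continuous_abs continuous_const) (fun u hu => hωrc u hu.1)
    (fun q hq => mem_iInter₂.1 hωA q hq) hs

theorem exit_time_expectation_pos_general
    {Ω : Type*} [mΩ : MeasurableSpace Ω] (P : Measure Ω) [IsProbabilityMeasure P]
    (𝓕 : Filtration ℝ mΩ) (X : ℝ → Ω → ℝ)
    (hX : IsLevy P 𝓕 X)
    (b₁ b₂ b₃ b₄ : ℝ) (h12 : b₁ < b₂) (h34 : b₃ < b₄) :
    ∃ δ : ℝ≥0∞, 0 < δ ∧ ∀ x ∈ Set.Icc b₂ b₃,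
      δ ≤ ∫⁻ ω, min (hitLow X x b₁ ω) (hitHigh X x b₄ ω) ∂P := by
  obtain ⟨η, hη, hη₁, hη₄⟩ : ∃ η : ℝ, 0 < η ∧ η < b₂ - b₁ ∧ η < b₄ - b₃ :=
    have hm := lt_min (sub_pos.2 h12) (sub_pos.2 h34)
    ⟨_, half_pos hm, (half_lt_self hm).trans_le (min_le_left _ _),
      (half_lt_self hm).trans_le (min_le_right _ _)⟩
  obtain ⟨t, ht, A, hA, hPA, hsmall⟩ := exists_measure_ne_zero_forall_abs_le (P := P)
    (fun t => (hX.adapted t).mono (𝓕.le t) le_rfl) hX.init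
    (hX.cadlag.mono fun ω hω t ht => (hω t ht).1) hη
  refine ⟨ENNReal.ofReal t * P A, ENNReal.mul_pos (ENNReal.ofReal_pos.2 ht).ne' hPA,
    fun x hx => ?_⟩
  have hinside : ∀ᵐ ω ∂P, A.indicator (fun _ => ENNReal.ofReal t) ω ≤
      min (hitLow X x b₁ ω) (hitHigh X x b₄ ω) := by
    filter_upwards [hsmall] with ω hω
    by_cases hωA : ω ∈ A
    · rw [indicator_of_mem hωA]
      refine ofReal_le_min_hitLow_hitHigh fun s hs hst => ?_
      have hXs := abs_le.1 (hω hωA s ⟨hs, hst⟩)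
      constructor <;> linarith [hx.1, hx.2]
    · rw [indicator_of_notMem hωA]
      exact zero_le
  calc ENNReal.ofReal t * P A = ∫⁻ ω, A.indicator (fun _ => ENNReal.ofReal t) ω ∂P := by
        rw [lintegral_indicator hA, setLIntegral_const]
    _ ≤ _ := lintegral_mono_ae hinside

/-- For every `b₁ < b₂ < b₃ < b₄`, the expected exit time of
`x + X` from `(b₁, b₄)` is bounded away from zero uniformly over `x ∈ [b₂, b₃]`. -/
theorem exit_time_expectation_pos
    {Ω : Type*} [mΩ : MeasurableSpace Ω] (P : Measure Ω) [IsProbabilityMeasure P]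
    (𝓕 : Filtration ℝ mΩ) (X : ℝ → Ω → ℝ)
    (hX : IsLevy P 𝓕 X)
    (b₁ b₂ b₃ b₄ : ℝ) (h12 : b₁ < b₂) (h23 : b₂ < b₃) (h34 : b₃ < b₄) :
    ∃ δ : ℝ≥0∞, 0 < δ ∧ ∀ x ∈ Set.Icc b₂ b₃,
      δ ≤ ∫⁻ ω, min (hitLow X x b₁ ω) (hitHigh X x b₄ ω) ∂P :=
  exit_time_expectation_pos_general (mΩ := mΩ) P 𝓕 X hX b₁ b₂ b₃ b₄ h12 h34

end MFGPaper
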